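/- arXiv:1008.4845 — 6 statements merged into one kernel-verified Lean document; each statement's English description precedes it below -/
import Mathlib

section
/- For every subset E of the positive integers there exist a countable abelian group G, a subgroup H of G, and a group automorphism v : G → G such that: (i) E = L(G,H,v), i.e. E equals the set of cardinalities #({v^i(h) : i ∈ ℤ} ∩ H) as h ranges over the nonzero elements of H; and (ii) the set of periodic points of the dual automorphism v̂ of the Pontryagin dual Ĝ (the characters χ of G such that χ ∘ v^n = χ for some integer n ≥ 1) is a countable dense subgroup of Ĝ. -/
open scoped Nat

namespace AlgLemma

/-- A prime `q n ≡ 1 (mod n!)`. -/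
noncomputable def q (n : ℕ) : ℕ :=
  (Nat.exists_prime_gt_modEq_one (k := n !) n n.factorial_ne_zero).choose

lemma q_prime (n : ℕ) : (q n).Prime :=
  (Nat.exists_prime_gt_modEq_one (k := n !) n n.factorial_ne_zero).choose_spec.1

lemma q_mod (n : ℕ) : q n ≡ 1 [MOD n !] :=
  (Nat.exists_prime_gt_modEq_one (k := n !) n n.factorial_ne_zero).choose_spec.2.2

instance (n : ℕ) : Fact (q n).Prime := ⟨q_prime n⟩
instance (n : ℕ) : NeZero (q n) := ⟨(q_prime n).ne_zero⟩

lemma factorial_dvd (n : ℕ) : n ! ∣ q n - 1 :=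
  (Nat.modEq_iff_dvd' (q_prime n).one_lt.le).mp (q_mod n).symm

/-- A unit of order `n !` in `ZMod (q n)`. -/
noncomputable def β (n : ℕ) : (ZMod (q n))ˣ :=
  (IsCyclic.exists_generator (α := (ZMod (q n))ˣ)).choose ^ ((q n - 1) / n !)

lemma orderOf_β (n : ℕ) : orderOf (β n) = n ! := by
  have hg := (IsCyclic.exists_generator (α := (ZMod (q n))ˣ)).choose_spec
  have hcard : orderOf (IsCyclic.exists_generator (α := (ZMod (q n))ˣ)).choose
      = q n - 1 := by
    rw [orderOf_eq_card_of_forall_mem_zpowers hg, Nat.card_eq_fintype_card, ZMod.card_units]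
  have hq1 : q n - 1 ≠ 0 := by
    have := (q_prime n).two_le; omega
  rw [β, orderOf_pow, hcard, Nat.gcd_eq_right (Nat.div_dvd_of_dvd (factorial_dvd n)),
    Nat.div_div_self (factorial_dvd n) hq1]



/-- second unit -/
noncomputable def β' (n : ℕ) : (ZMod (q n))ˣ := β n ^ (n + 1)

/-- component automorphism -/
noncomputable def w (n : ℕ) : (ZMod (q n) × ZMod (q n)) ≃+ (ZMod (q n) × ZMod (q n)) where
  toFun z := (β n • z.1, β' n • z.2)
  invFun z := ((β n)⁻¹ • z.1, (β' n)⁻¹ • z.2)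
  left_inv z := by simp
  right_inv z := by simp
  map_add' z₁ z₂ := by simp [smul_add, Prod.ext_iff]

variable (E : Set ℕ)

/-- index type -/
abbrev Idx := {n : ℕ // n ∈ E}

instance : Countable (Idx E) := Subtype.countable

/-- the big group -/
abbrev G := Π₀ e : Idx E, (ZMod (q e.val) × ZMod (q e.val))


/-- the automorphism -/
noncomputable def V : AddAut (G E) :=
  (DFinsupp.mapRange.addEquiv (fun e : Idx E => w e.val))

lemma V_apply (x : G E) (e : Idx E) : (V E) x e = w e.val (x e) := by
  show DFinsupp.mapRange.addEquiv (fun e : Idx E => w e.val) x e = _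
  rfl

lemma V_symm_apply (x : G E) (e : Idx E) : (-(V E)) x e = (w e.val).symm (x e) := by
  show (DFinsupp.mapRange.addEquiv (fun e : Idx E => w e.val)).symm x e = _
  rw [DFinsupp.mapRange.addEquiv_symm]
  simp [DFinsupp.mapRange.addEquiv]

lemma w_apply (n : ℕ) (z : ZMod (q n) × ZMod (q n)) :
    w n z = (β n • z.1, β' n • z.2) := rfl

lemma w_symm_apply (n : ℕ) (z : ZMod (q n) × ZMod (q n)) :
    (w n).symm z = ((β n)⁻¹ • z.1, (β' n)⁻¹ • z.2) := rfl

lemma V_zpow_apply (i : ℤ) (x : G E) (e : Idx E) :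
    ((i • V E) x) e = ((β e.val ^ i) • (x e).1, (β' e.val ^ i) • (x e).2) := by
  induction i using Int.induction_on generalizing x with
  | zero => simp
  | succ k ih =>
      rw [add_one_zsmul, AddAut.add_apply, ih, V_apply, w_apply]
      simp [zpow_add_one, mul_smul]
  | pred k ih =>
      rw [sub_one_zsmul, AddAut.add_apply, ih, V_symm_apply, w_symm_apply]
      simp [zpow_sub_one, mul_smul]



/-- the subgroup -/
noncomputable def Hs : AddSubgroup (G E) where
  carrier := {x | ∀ e, (x e).1 = (x e).2}
  add_mem' := by
    intro a b ha hb e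
    simp only [DFinsupp.add_apply, Prod.fst_add, Prod.snd_add, ha e, hb e]
  zero_mem' := by intro e; simp
  neg_mem' := by
    intro a ha e
    simp only [DFinsupp.neg_apply, Prod.fst_neg, Prod.snd_neg, ha e]

lemma mem_Hs_iff (x : G E) : x ∈ Hs E ↔ ∀ e, (x e).1 = (x e).2 := Iff.rfl

variable {E}

lemma beta_zpow_eq_one_iff {n : ℕ} (i : ℤ) : β n ^ i = 1 ↔ ((n ! : ℤ)) ∣ i := by
  rw [← orderOf_dvd_iff_zpow_eq_one, orderOf_β]

lemma beta_pow_eq_iff {n : ℕ} (hn : 0 < n) (i : ℤ) :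
    β n ^ i = β' n ^ i ↔ (((n - 1)! : ℤ)) ∣ i := by
  have h1 : β' n ^ i = β n ^ (((n : ℤ) + 1) * i) := by
    rw [β', ← zpow_natCast (β n) (n + 1), ← zpow_mul]
    push_cast
    ring_nf
  rw [h1]
  have h2 : β n ^ (((n : ℤ) + 1) * i) = β n ^ i * β n ^ ((n : ℤ) * i) := by
    rw [← zpow_add]; ring_nf
  rw [h2, eq_comm, mul_eq_left, beta_zpow_eq_one_iff]
  have h3 : (n ! : ℤ) = (n : ℤ) * ((n - 1)! : ℤ) := by
    rw [← Nat.mul_factorial_pred hn.ne']; push_cast; ring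
  rw [h3, mul_dvd_mul_iff_left (by exact_mod_cast hn.ne' : (n : ℤ) ≠ 0)]

lemma smul_cancel {m : ℕ} [Fact m.Prime] {γ δ : (ZMod m)ˣ} {a : ZMod m} (ha : a ≠ 0)
    (h : γ • a = δ • a) : γ = δ := by
  have : (γ : ZMod m) * a = (δ : ZMod m) * a := h
  exact Units.ext (mul_right_cancel₀ ha this)

lemma diag_comp {h : G E} (hm : h ∈ Hs E) {e : Idx E} (he : e ∈ h.support) :
    (h e).1 = (h e).2 ∧ (h e).1 ≠ 0 := by
  refine ⟨hm e, fun h0 => ?_⟩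
  have := DFinsupp.mem_support_iff.mp he
  apply this
  have h2 := hm e
  rw [h0] at h2
  rw [Prod.ext_iff, h0, ← h2]
  exact ⟨rfl, rfl⟩

lemma returns_iff {h : G E} (hm : h ∈ Hs E) (hE : ∀ n ∈ E, 0 < n) (i : ℤ) :
    (i • V E) h ∈ Hs E ↔ ∀ e ∈ h.support, ((((e : ℕ) - 1)! : ℤ)) ∣ i := by
  rw [mem_Hs_iff]
  constructor
  · intro H e he
    have := H e
    rw [V_zpow_apply] at this
    obtain ⟨hd, hne⟩ := diag_comp hm he
    rw [← hd] at this
    rw [← beta_pow_eq_iff (hE _ e.2) i]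
    exact smul_cancel hne this
  · intro H e
    rw [V_zpow_apply]
    by_cases he : e ∈ h.support
    · obtain ⟨hd, hne⟩ := diag_comp hm he
      have := (beta_pow_eq_iff (hE _ e.2) i).mpr (H e he)
      simp only [← hd, this]
    · have : h e = 0 := DFinsupp.notMem_support_iff.mp he
      simp [this]

lemma period_iff {h : G E} (hm : h ∈ Hs E) (i : ℤ) :
    (i • V E) h = h ↔ ∀ e ∈ h.support, (((e : ℕ)! : ℤ)) ∣ i := by
  rw [DFinsupp.ext_iff]
  constructor
  · intro H e he
    have := H e
    rw [V_zpow_apply] at this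
    obtain ⟨_, hne⟩ := diag_comp hm he
    have h1 : β (e : ℕ) ^ i • (h e).1 = (h e).1 := (Prod.ext_iff.mp this).1
    have h2 : β (e : ℕ) ^ i = 1 := by
      apply smul_cancel hne
      rw [h1, one_smul]
    rw [← beta_zpow_eq_one_iff]
    exact h2
  · intro H e
    rw [V_zpow_apply]
    by_cases he : e ∈ h.support
    · have h1 : β (e : ℕ) ^ i = 1 := (beta_zpow_eq_one_iff i).mpr (H e he)
      have h2 : β' (e : ℕ) ^ i = 1 := by
        rw [β', ← zpow_natCast (β (e : ℕ)) ((e : ℕ) + 1), ← zpow_mul, mul_comm, zpow_mul,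
          h1, one_zpow]
      rw [h1, h2, one_smul, one_smul]
    · have : h e = 0 := DFinsupp.notMem_support_iff.mp he
      simp [this]



theorem main_count (hE : ∀ n ∈ E, 0 < n) {h : G E} (hm : h ∈ Hs E) (h0 : h ≠ 0) :
    ({x : G E | ∃ i : ℤ, (i • V E) h = x} ∩ (Hs E : Set (G E))).Finite ∧
    ({x : G E | ∃ i : ℤ, (i • V E) h = x} ∩ (Hs E : Set (G E))).ncard
      = h.support.sup (fun e => (e : ℕ)) ∧ h.support.sup (fun e => (e : ℕ)) ∈ E := by
  set M := h.support.sup (fun e => (e : ℕ)) with hMdef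
  have hSne : h.support.Nonempty := by
    rw [Finset.nonempty_iff_ne_empty]
    intro hcon
    exact h0 (DFinsupp.support_eq_empty.mp hcon)
  obtain ⟨e₀, he₀, hM⟩ := Finset.exists_mem_eq_sup h.support hSne (fun e => (e : ℕ))
  have hMval : M = (e₀ : ℕ) := hMdef.trans hM
  have hMpos : 0 < M := by rw [hMval]; exact hE _ e₀.2
  have hMe : M ∈ E := by rw [hMval]; exact e₀.2
  have hfacne : ((M - 1)! : ℤ) ≠ 0 := by exact_mod_cast (Nat.factorial_pos (M - 1)).ne'
  have hMfac : ((M : ℤ)) * ((M - 1)! : ℤ) = ((M)! : ℤ) := by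
    exact_mod_cast Nat.mul_factorial_pred hMpos.ne'
  have hretM : ∀ i : ℤ, ((i • V E) h ∈ Hs E ↔ (((M - 1)! : ℤ)) ∣ i) := by
    intro i
    rw [returns_iff hm hE]
    constructor
    · intro H
      have := H e₀ he₀
      rwa [← hMval] at this
    · intro hd e he
      refine dvd_trans ?_ hd
      have hle : (e : ℕ) ≤ M := by rw [hMdef]; exact Finset.le_sup he
      exact_mod_cast Nat.factorial_dvd_factorial (Nat.sub_le_sub_right hle 1)
  have hperM : ∀ i : ℤ, ((i • V E) h = h ↔ ((M ! : ℤ)) ∣ i) := by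
    intro i
    rw [period_iff hm]
    constructor
    · intro H
      have := H e₀ he₀
      rwa [← hMval] at this
    · intro hd e he
      refine dvd_trans ?_ hd
      have hle : (e : ℕ) ≤ M := by rw [hMdef]; exact Finset.le_sup he
      exact_mod_cast Nat.factorial_dvd_factorial hle
  have hper2 : ∀ i j : ℤ, ((i • V E) h = (j • V E) h ↔ ((M ! : ℤ)) ∣ (i - j)) := by
    have key : ∀ i j : ℤ, (j • V E) (((i - j) • V E) h) = (i • V E) h := by
      intro i j
      rw [← AddAut.add_apply, ← add_zsmul]
      congr 1
      ring
    intro i j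
    rw [← hperM (i - j)]
    constructor
    · intro hh
      apply (j • V E).injective
      rw [key, hh]
    · intro hh
      rw [← key i j, hh]
  set f : ℕ → G E := fun k => (((k : ℤ) * ((M - 1)! : ℤ)) • V E) h with hf
  set Fs := (Finset.range M).image f with hFs
  have hset : {x : G E | ∃ i : ℤ, (i • V E) h = x} ∩ (Hs E : Set (G E)) = ↑Fs := by
    ext x
    simp only [Set.mem_inter_iff, Set.mem_setOf_eq, hFs, Finset.coe_image, Set.mem_image,
      Finset.mem_coe, Finset.mem_range, SetLike.mem_coe]
    constructor
    · rintro ⟨⟨i, rfl⟩, hxH⟩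
      obtain ⟨t, rfl⟩ := (hretM i).mp hxH
      have hMne : ((M : ℤ)) ≠ 0 := by exact_mod_cast hMpos.ne'
      have h1 : (0 : ℤ) ≤ t % (M : ℤ) := Int.emod_nonneg t hMne
      have h2 : t % (M : ℤ) < (M : ℤ) := Int.emod_lt_of_pos t (by exact_mod_cast hMpos)
      refine ⟨(t % (M : ℤ)).toNat, by omega, ?_⟩
      apply (hper2 _ _).mpr
      rw [Int.toNat_of_nonneg h1]
      exact ⟨-(t / (M : ℤ)), by rw [Int.emod_def, ← hMfac]; ring⟩
    · rintro ⟨k, _, rfl⟩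
      exact ⟨⟨_, rfl⟩, (hretM _).mpr ⟨k, by ring⟩⟩
  have hcard : Fs.card = M := by
    rw [hFs, Finset.card_image_of_injOn, Finset.card_range]
    intro a ha b hb hab
    have hd := (hper2 _ _).mp hab
    have h2 : ((M : ℤ)) ∣ ((a : ℤ) - b) := by
      obtain ⟨c, hc⟩ := hd
      refine ⟨c, ?_⟩
      apply mul_right_cancel₀ hfacne
      linear_combination hc - c * hMfac
    simp only [Finset.coe_range, Set.mem_Iio] at ha hb
    have habs : |((a : ℤ)) - b| < (M : ℤ) := by
      rw [abs_lt]
      constructor <;> [omega; omega]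
    have := Int.eq_zero_of_abs_lt_dvd h2 habs
    omega
  rw [hset]
  refine ⟨Finset.finite_toSet _, ?_, hMe⟩
  rw [Set.ncard_coe_finset, hcard]



lemma V_pow_single (i : ℤ) (e : Idx E) (z : ZMod (q (e : ℕ)) × ZMod (q (e : ℕ))) :
    (i • V E) (DFinsupp.single e z) =
      DFinsupp.single e (β (e : ℕ) ^ i • z.1, β' (e : ℕ) ^ i • z.2) := by
  ext e' : 1
  rw [V_zpow_apply]
  obtain rfl | hne := eq_or_ne e e'
  · rw [DFinsupp.single_eq_same, DFinsupp.single_eq_same]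
  · rw [DFinsupp.single_eq_of_ne hne.symm, DFinsupp.single_eq_of_ne hne.symm]
    simp

lemma char_coord {m : ℕ} [Fact m.Prime] (Jf : ZMod m →+ AddCircle (1 : ℝ)) (γ : (ZMod m)ˣ)
    (hγ : γ ≠ 1) (hfix : ∀ x, Jf ((γ : ZMod m) * x) = Jf x) : ∀ x, Jf x = 0 := by
  have hc : ((γ : ZMod m) - 1) ≠ 0 := by
    refine sub_ne_zero.mpr fun hh => hγ (Units.ext ?_)
    rw [hh, Units.val_one]
  intro x
  have h1 := hfix (((γ : ZMod m) - 1)⁻¹ * x)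
  have hx : x = (γ : ZMod m) * (((γ : ZMod m) - 1)⁻¹ * x) - ((γ : ZMod m) - 1)⁻¹ * x := by
    field_simp
  rw [hx, map_sub, h1, sub_self]

lemma char_kill {k : ℕ} (χ : (G E) →+ AddCircle (1 : ℝ))
    (hper : ∀ g : G E, χ ((k • V E) g) = χ g) {e : Idx E}
    (hb : β (e : ℕ) ^ k ≠ 1) (hb' : β' (e : ℕ) ^ k ≠ 1)
    (z : ZMod (q (e : ℕ)) × ZMod (q (e : ℕ))) : χ (DFinsupp.single e z) = 0 := by
  have hz : z = (z.1, 0) + (0, z.2) := by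
    rw [Prod.ext_iff]; simp
  rw [hz, DFinsupp.single_add, map_add]
  have hVk : ∀ y : ZMod (q (e : ℕ)) × ZMod (q (e : ℕ)),
      (k • V E) (DFinsupp.single e y) =
        DFinsupp.single e ((β (e : ℕ) ^ k : (ZMod (q (e : ℕ)))ˣ) • y.1,
          (β' (e : ℕ) ^ k : (ZMod (q (e : ℕ)))ˣ) • y.2) := by
    intro y
    rw [← natCast_zsmul (V E) k, V_pow_single, zpow_natCast, zpow_natCast]
  have hfst : χ (DFinsupp.single e ((z.1 : ZMod (q (e : ℕ))), (0 : ZMod (q (e : ℕ))))) = 0 := by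
    set Jf : ZMod (q (e : ℕ)) →+ AddCircle (1 : ℝ) :=
      χ.comp ((DFinsupp.singleAddHom
          (fun e : Idx E => ZMod (q (e : ℕ)) × ZMod (q (e : ℕ))) e).comp
        (AddMonoidHom.inl (ZMod (q (e : ℕ))) (ZMod (q (e : ℕ))))) with hJf
    have : ∀ x, Jf ((↑(β (e : ℕ) ^ k) : ZMod (q (e : ℕ))) * x) = Jf x := by
      intro x
      show χ (DFinsupp.single e ((↑(β (e : ℕ) ^ k) : ZMod (q (e : ℕ))) * x, 0)) =
        χ (DFinsupp.single e (x, 0))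
      have h2 := hper (DFinsupp.single e ((x : ZMod (q (e : ℕ))), (0 : ZMod (q (e : ℕ)))))
      rw [hVk] at h2
      simpa [Units.smul_def] using h2
    exact char_coord Jf _ hb this z.1
  have hsnd : χ (DFinsupp.single e ((0 : ZMod (q (e : ℕ))), (z.2 : ZMod (q (e : ℕ))))) = 0 := by
    set Jf : ZMod (q (e : ℕ)) →+ AddCircle (1 : ℝ) :=
      χ.comp ((DFinsupp.singleAddHom
          (fun e : Idx E => ZMod (q (e : ℕ)) × ZMod (q (e : ℕ))) e).comp
        (AddMonoidHom.inr (ZMod (q (e : ℕ))) (ZMod (q (e : ℕ))))) with hJf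
    have : ∀ x, Jf ((↑(β' (e : ℕ) ^ k) : ZMod (q (e : ℕ))) * x) = Jf x := by
      intro x
      show χ (DFinsupp.single e (0, (↑(β' (e : ℕ) ^ k) : ZMod (q (e : ℕ))) * x)) =
        χ (DFinsupp.single e (0, x))
      have h2 := hper (DFinsupp.single e ((0 : ZMod (q (e : ℕ))), (x : ZMod (q (e : ℕ)))))
      rw [hVk] at h2
      simpa [Units.smul_def] using h2
    exact char_coord Jf _ hb' this z.2
  rw [hfst, hsnd, add_zero]



lemma char_ext {χ ψ : (G E) →+ AddCircle (1 : ℝ)}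
    (hs : ∀ (e : Idx E) z, χ (DFinsupp.single e z) = ψ (DFinsupp.single e z)) : χ = ψ := by
  refine AddMonoidHom.ext fun g => ?_
  induction g using DFinsupp.induction with
  | h0 => rw [map_zero, map_zero]
  | ha i b f hf hb ih => rw [map_add, map_add, ih, hs]

lemma single_decomp (e : Idx E) (z : ZMod (q (e : ℕ)) × ZMod (q (e : ℕ)))
    (χ : (G E) →+ AddCircle (1 : ℝ)) :
    χ (DFinsupp.single e z) =
      z.1.val • χ (DFinsupp.single e ((1 : ZMod (q (e : ℕ))), (0 : ZMod (q (e : ℕ))))) +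
      z.2.val • χ (DFinsupp.single e ((0 : ZMod (q (e : ℕ))), (1 : ZMod (q (e : ℕ))))) := by
  have h1 : z = z.1.val • ((1 : ZMod (q (e : ℕ))), (0 : ZMod (q (e : ℕ))))
      + z.2.val • ((0 : ZMod (q (e : ℕ))), (1 : ZMod (q (e : ℕ)))) := by
    rw [Prod.ext_iff]
    simp [nsmul_eq_mul, ZMod.natCast_val, ZMod.cast_id]
  set Jf := χ.comp (DFinsupp.singleAddHom
      (fun e : Idx E => ZMod (q (e : ℕ)) × ZMod (q (e : ℕ))) e) with hJf
  show Jf z = z.1.val • Jf (1, 0) + z.2.val • Jf (0, 1)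
  conv_lhs => rw [h1]
  rw [map_add, map_nsmul, map_nsmul]

lemma torsion_single (e : Idx E) (χ : (G E) →+ AddCircle (1 : ℝ))
    (y : ZMod (q (e : ℕ)) × ZMod (q (e : ℕ))) :
    (q (e : ℕ)) • χ (DFinsupp.single e y) = 0 := by
  set Jf := χ.comp (DFinsupp.singleAddHom
      (fun e : Idx E => ZMod (q (e : ℕ)) × ZMod (q (e : ℕ))) e) with hJf
  show (q (e : ℕ)) • Jf y = 0
  rw [← map_nsmul]
  have : (q (e : ℕ)) • y = 0 := by
    rw [Prod.ext_iff]
    simp [nsmul_eq_mul, ZMod.natCast_self]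
  rw [this, map_zero]

lemma torsion_countable (m : ℕ) (hm : m ≠ 0) :
    {z : AddCircle (1 : ℝ) | m • z = 0}.Countable := by
  apply Set.Countable.mono ?_
    (Set.countable_range (fun j : ℤ => (((j : ℝ) / m : ℝ) : AddCircle (1 : ℝ))))
  intro z hz
  induction z using QuotientAddGroup.induction_on with
  | H r =>
    have h1 : ((m • r : ℝ) : AddCircle (1 : ℝ)) = 0 := by
      rw [AddCircle.coe_nsmul]
      exact hz
    rw [AddCircle.coe_eq_zero_iff] at h1
    obtain ⟨j, hj⟩ := h1
    refine ⟨j, ?_⟩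
    have hmr : (m : ℝ) ≠ 0 := by exact_mod_cast hm
    have hmul : (m : ℝ) * r = (j : ℝ) := by
      simpa [zsmul_eq_mul, nsmul_eq_mul] using hj.symm
    have hr : r = (j : ℝ) / m := by
      rw [eq_div_iff hmr, mul_comm]
      exact hmul
    show (((j : ℝ) / m : ℝ) : AddCircle (1 : ℝ)) = (r : AddCircle (1 : ℝ))
    rw [← hr]

lemma nat_bound {n k : ℕ} (hk : 1 ≤ k) (h : n ! ≤ k * (n + 1)) : n ≤ k + 2 := by
  by_cases hn : n ≤ 2
  · omega
  · obtain ⟨m, rfl⟩ : ∃ m, n = m + 3 := ⟨n - 3, by omega⟩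
    have e1 : (m + 3)! = (m + 3) * ((m + 2) * (m + 1)!) := by
      rw [← Nat.factorial_succ, ← Nat.factorial_succ]
    have e2 : (m + 3 + 1) * (m + 1)! ≤ (m + 3)! := by
      rw [e1]
      have : m + 3 + 1 ≤ (m + 3) * (m + 2) := by nlinarith
      calc (m + 3 + 1) * (m + 1)! ≤ ((m + 3) * (m + 2)) * (m + 1)! :=
            Nat.mul_le_mul_right _ this
        _ = (m + 3) * ((m + 2) * (m + 1)!) := by ring
    have e3 : (m + 3 + 1) * (m + 1)! ≤ k * (m + 3 + 1) := le_trans e2 h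
    have e4 : (m + 1)! ≤ k := by
      rw [mul_comm k (m + 3 + 1)] at e3
      exact Nat.le_of_mul_le_mul_left e3 (by omega)
    have := Nat.self_le_factorial (m + 1)
    omega

lemma periodic_countable {k : ℕ} (hk : 1 ≤ k) :
    {χ : (G E) →+ AddCircle (1 : ℝ) | ∀ g, χ ((k • V E) g) = χ g}.Countable := by
  classical
  set D : Set (Idx E) := {e | ((e : ℕ))! ≤ k * ((e : ℕ) + 1)} with hD
  have hDfin : D.Finite := by
    apply Set.Finite.subset
      ((Set.finite_Iic (k + 2)).preimage
        (Set.injOn_of_injective (Subtype.val_injective (p := fun n => n ∈ E))))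
    intro e he
    exact nat_bound hk he
  haveI : Finite ↥D := hDfin.to_subtype
  haveI : ∀ e : Idx E,
      Countable ↥{z : AddCircle (1 : ℝ) | (q (e : ℕ)) • z = 0} := fun e =>
    (torsion_countable _ (q_prime (e : ℕ)).ne_zero).to_subtype
  rw [← Set.countable_coe_iff]
  have hinj : Function.Injective
      (fun χ : ↥{χ : (G E) →+ AddCircle (1 : ℝ) | ∀ g, χ ((k • V E) g) = χ g} =>
        (fun e : ↥D =>
          ((⟨χ.1 (DFinsupp.single e.1 (1, 0)), torsion_single e.1 χ.1 _⟩ :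
              ↥{z : AddCircle (1 : ℝ) | (q ((e : Idx E) : ℕ)) • z = 0}),
           (⟨χ.1 (DFinsupp.single e.1 (0, 1)), torsion_single e.1 χ.1 _⟩ :
              ↥{z : AddCircle (1 : ℝ) | (q ((e : Idx E) : ℕ)) • z = 0})))) := by
    intro χ ψ hfeq
    apply Subtype.ext
    apply char_ext
    intro e z
    by_cases heD : e ∈ D
    · have hcf := congrFun hfeq ⟨e, heD⟩
      rw [Prod.ext_iff, Subtype.ext_iff, Subtype.ext_iff] at hcf
      obtain ⟨h10, h01⟩ := hcf
      simp only at h10 h01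
      rw [single_decomp e z χ.1, single_decomp e z ψ.1, h10, h01]
    · have hb : β (e : ℕ) ^ k ≠ 1 := by
        intro hcon
        apply heD
        have hdvd : ((e : ℕ))! ∣ k := by
          rw [← orderOf_β (e : ℕ)]
          exact orderOf_dvd_of_pow_eq_one hcon
        have : ((e : ℕ))! ≤ k := Nat.le_of_dvd (by omega) hdvd
        calc ((e : ℕ))! ≤ k := this
          _ ≤ k * ((e : ℕ) + 1) := Nat.le_mul_of_pos_right _ (by omega)
      have hb' : β' (e : ℕ) ^ k ≠ 1 := by
        intro hcon
        apply heD
        rw [β', ← pow_mul] at hcon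
        have hdvd : ((e : ℕ))! ∣ ((e : ℕ) + 1) * k := by
          rw [← orderOf_β (e : ℕ)]
          exact orderOf_dvd_of_pow_eq_one hcon
        have : ((e : ℕ))! ≤ ((e : ℕ) + 1) * k :=
          Nat.le_of_dvd (by positivity) hdvd
        rwa [mul_comm] at this
      rw [char_kill χ.1 χ.2 hb hb' z, char_kill ψ.1 ψ.2 hb hb' z]
  exact hinj.countable

lemma periodic_set_countable :
    Set.Countable {χ : (G E) →+ AddCircle (1 : ℝ) |
      ∃ n : ℕ, 1 ≤ n ∧ ∀ g : G E, χ ((n • V E) g) = χ g} := by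
  rw [Set.setOf_exists]
  apply Set.countable_iUnion
  intro n
  by_cases hn : 1 ≤ n
  · apply Set.Countable.mono ?_ (periodic_countable (E := E) hn)
    intro χ hχ
    exact hχ.2
  · convert Set.countable_empty
    rw [Set.eq_empty_iff_forall_notMem]
    intro χ hχ
    exact hn hχ.1



lemma per_iter {χ : (G E) →+ AddCircle (1 : ℝ)} {a : ℕ}
    (h : ∀ g, χ ((a • V E) g) = χ g) : ∀ (b : ℕ) (g), χ (((a * b) • V E) g) = χ g := by
  intro b
  induction b with
  | zero => simp
  | succ n ih =>
      intro g
      have hsplit : ((a * (n + 1)) • V E) g = ((a * n) • V E) ((a • V E) g) := by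
        rw [Nat.mul_succ, add_nsmul, AddAut.add_apply]
      rw [hsplit, ih, h]

lemma density (χ : (G E) →+ AddCircle (1 : ℝ)) :
    (⇑χ : G E → AddCircle (1 : ℝ)) ∈ closure
      ((fun ψ : (G E) →+ AddCircle (1 : ℝ) => ⇑ψ) ''
        {ψ : (G E) →+ AddCircle (1 : ℝ) |
          ∃ n : ℕ, 1 ≤ n ∧ ∀ g : G E, ψ ((n • V E) g) = ψ g}) := by
  classical
  rw [mem_closure_iff_nhds]
  intro U hU
  rw [nhds_pi] at hU
  obtain ⟨I, hIfin, t, ht, hsub⟩ := Filter.mem_pi.mp hU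
  set T : Finset (Idx E) := hIfin.toFinset.biUnion (fun g => g.support) with hT
  set kT : ℕ := ∏ e ∈ T, ((e : ℕ))! with hkT
  have hkT1 : 1 ≤ kT := Finset.prod_pos (fun e _ => Nat.factorial_pos _)
  set pr := DFinsupp.filterAddMonoidHom
    (fun e : Idx E => ZMod (q (e : ℕ)) × ZMod (q (e : ℕ))) (· ∈ T) with hpr
  set ψ := χ.comp pr with hψ
  have hpra : ∀ (x : G E) (e : Idx E), pr x e = if e ∈ T then x e else 0 := by
    intro x e
    rw [hpr]
    show DFinsupp.filter (· ∈ T) x e = _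
    rw [DFinsupp.filter_apply]
  have hprg : ∀ g ∈ I, pr g = g := by
    intro g hg
    ext e : 1
    rw [hpra]
    split_ifs with he
    · rfl
    · symm
      by_contra hne
      apply he
      rw [hT]
      apply Finset.mem_biUnion.mpr
      exact ⟨g, hIfin.mem_toFinset.mpr hg, DFinsupp.mem_support_iff.mpr hne⟩
  have hψper : ∀ g, ψ ((kT • V E) g) = ψ g := by
    intro g
    show χ (pr ((kT • V E) g)) = χ (pr g)
    congr 1
    ext e : 1
    rw [hpra, hpra]
    split_ifs with he
    · rw [← natCast_zsmul (V E) kT, V_zpow_apply]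
      have hβ : β (e : ℕ) ^ (kT : ℤ) = 1 := by
        rw [zpow_natCast]
        apply orderOf_dvd_iff_pow_eq_one.mp
        rw [orderOf_β]
        exact Finset.dvd_prod_of_mem _ he
      have hβ' : β' (e : ℕ) ^ (kT : ℤ) = 1 := by
        rw [β', ← zpow_natCast (β (e : ℕ)) ((e : ℕ) + 1), ← zpow_mul, mul_comm, zpow_mul,
          hβ, one_zpow]
      rw [hβ, hβ', one_smul, one_smul]
    · rfl
  refine ⟨⇑ψ, ?_, ⟨ψ, ⟨kT, hkT1, hψper⟩, rfl⟩⟩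
  apply hsub
  rw [Set.mem_pi]
  intro g hg
  have : ψ g = χ g := by
    show χ (pr g) = χ g
    rw [hprg g hg]
  rw [this]
  exact mem_of_mem_nhds (ht g)



lemma single_mem_Hs (e : Idx E) (a : ZMod (q (e : ℕ))) :
    DFinsupp.single e ((a : ZMod (q (e : ℕ))), (a : ZMod (q (e : ℕ)))) ∈ Hs E := by
  intro e'
  obtain rfl | hne := eq_or_ne e e'
  · rw [DFinsupp.single_eq_same]
  · rw [DFinsupp.single_eq_of_ne hne.symm]
    rfl

end AlgLemma

open AlgLemma in
/-- Algebraic Lemma: For every set `E` of positive integers there exist a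
countable abelian group `G`, a subgroup `H ⊆ G` and an automorphism `v` of `G` such that
(i) `E = L(G,H,v)`, the set of (finite) cardinalities `#({vⁱ(h) : i ∈ ℤ} ∩ H)` over
nonzero `h ∈ H`, and (ii) the set of `v̂`-periodic characters of `G` (characters `χ` of
`G` with `χ ∘ vⁿ = χ` for some `n ≥ 1`) is a countable dense subgroup of the dual of `G`
(density being with respect to the topology of pointwise convergence, which is the
compact-open topology of `Ĝ` since `G` is discrete). -/
theorem algebraic_lemma (E : Set ℕ) (hE : ∀ n ∈ E, 0 < n) :
    ∃ (G : Type) (instG : AddCommGroup G), haveI := instG;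
      Countable G ∧
      ∃ (H : AddSubgroup G) (v : AddAut G),
        -- (i) E = L(G, H, v):
        (∀ h ∈ H, h ≠ 0 →
          ({x : G | ∃ i : ℤ, (i • v) h = x} ∩ (H : Set G)).Finite ∧
          ({x : G | ∃ i : ℤ, (i • v) h = x} ∩ (H : Set G)).ncard ∈ E) ∧
        (∀ n ∈ E, ∃ h ∈ H, h ≠ 0 ∧
          ({x : G | ∃ i : ℤ, (i • v) h = x} ∩ (H : Set G)).ncard = n) ∧
        -- (ii) the subgroup of periodic points of the dual automorphism is countable
        -- and dense in the dual group:
        Set.Countable {χ : G →+ AddCircle (1 : ℝ) |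
          ∃ n : ℕ, 1 ≤ n ∧ ∀ g : G, χ ((n • v) g) = χ g} ∧
        (∀ χ ψ : G →+ AddCircle (1 : ℝ),
          (∃ n : ℕ, 1 ≤ n ∧ ∀ g : G, χ ((n • v) g) = χ g) →
          (∃ n : ℕ, 1 ≤ n ∧ ∀ g : G, ψ ((n • v) g) = ψ g) →
          (∃ n : ℕ, 1 ≤ n ∧ ∀ g : G, (χ + ψ) ((n • v) g) = (χ + ψ) g) ∧
          (∃ n : ℕ, 1 ≤ n ∧ ∀ g : G, (-χ) ((n • v) g) = (-χ) g)) ∧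
        ∀ χ : G →+ AddCircle (1 : ℝ),
          (⇑χ : G → AddCircle (1 : ℝ)) ∈ closure
            ((fun ψ : G →+ AddCircle (1 : ℝ) => ⇑ψ) ''
              {ψ : G →+ AddCircle (1 : ℝ) |
                ∃ n : ℕ, 1 ≤ n ∧ ∀ g : G, ψ ((n • v) g) = ψ g}) := by
  classical
  refine ⟨G E, inferInstance, inferInstance, Hs E, V E, ?_, ?_, ?_, ?_, ?_⟩
  · intro h hm h0
    obtain ⟨hfin, hcard, hmem⟩ := main_count hE hm h0
    refine ⟨hfin, ?_⟩
    rw [hcard]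
    exact hmem
  · intro n hn
    set e : Idx E := (⟨n, hn⟩ : Idx E) with he
    have hone : ((1 : ZMod (q n)), (1 : ZMod (q n))) ≠ (0 : ZMod (q n) × ZMod (q n)) := by
      intro hcon
      rw [Prod.ext_iff] at hcon
      exact one_ne_zero hcon.1
    have hmem : DFinsupp.single e ((1 : ZMod (q n)), (1 : ZMod (q n))) ∈ Hs E :=
      single_mem_Hs e 1
    have hne : (DFinsupp.single e ((1 : ZMod (q n)), (1 : ZMod (q n))) : G E) ≠ 0 := by
      intro hcon
      have h2 : (DFinsupp.single e ((1 : ZMod (q n)), (1 : ZMod (q n))) : G E) e = 0 := by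
        rw [hcon]; rfl
      rw [DFinsupp.single_eq_same] at h2
      exact hone h2
    refine ⟨DFinsupp.single e ((1 : ZMod (q n)), (1 : ZMod (q n))), hmem, hne, ?_⟩
    obtain ⟨_, hcard, _⟩ := main_count hE hmem hne
    rw [hcard, DFinsupp.support_single_ne_zero hone, Finset.sup_singleton]
  · exact periodic_set_countable
  · rintro χ ψ ⟨n₁, hn₁, hp₁⟩ ⟨n₂, hn₂, hp₂⟩
    refine ⟨⟨n₁ * n₂, Nat.one_le_iff_ne_zero.mpr (by positivity), fun g => ?_⟩,
      ⟨n₁, hn₁, fun g => ?_⟩⟩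
    · simp only [AddMonoidHom.add_apply]
      rw [per_iter hp₁ n₂ g]
      rw [mul_comm n₁ n₂, per_iter hp₂ n₁ g]
    · simp only [AddMonoidHom.neg_apply]
      rw [hp₁ g]
  · exact density
end

section
/- If S is an ergodic measurable measure-preserving action of H on a standard probability space (X,μ), then the induced G-action T on (G/H × X, λ×μ) is ergodic. -/
open MeasureTheory

section ActionDefs

variable {G X Y : Type*} [AddCommGroup G] [MeasurableSpace X] [MeasurableSpace Y]

/-- `T` is a measurable measure-preserving action of the additive group `G` on `(X, μ)`. -/
def IsMPAction (μ : Measure X) (T : G → X → X) : Prop :=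
  (∀ g : G, MeasurePreserving (T g) μ μ) ∧ T 0 = id ∧
    ∀ g g' : G, T (g + g') = T g ∘ T g'

/-- `S`, restricted to the subgroup `H`, is a measurable measure-preserving action
of `H` on `(X, μ)`. -/
def IsMPActionOn (H : AddSubgroup G) (μ : Measure X) (S : G → X → X) : Prop :=
  (∀ h ∈ H, MeasurePreserving (S h) μ μ) ∧ S 0 = id ∧
    ∀ h ∈ H, ∀ h' ∈ H, S (h + h') = S h ∘ S h'

/-- Ergodicity of a `G`-action: every invariant measurable set is null or conull. -/
def IsErgodicAction (μ : Measure X) (T : G → X → X) : Prop :=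
  ∀ A : Set X, MeasurableSet A → (∀ g : G, T g ⁻¹' A = A) → μ A = 0 ∨ μ Aᶜ = 0

/-- Ergodicity of the restriction to the subgroup `H` of a map `S : G → X → X`. -/
def IsErgodicActionOn (H : AddSubgroup G) (μ : Measure X) (S : G → X → X) : Prop :=
  ∀ A : Set X, MeasurableSet A → (∀ h ∈ H, S h ⁻¹' A = A) → μ A = 0 ∨ μ Aᶜ = 0

/-- The cocycle `h(g,y) = -s(π(g)+y) + g + s(y)` determined by a cross-section
`s : G ⧸ H → G` (it takes values in `H`). -/
def secCocycle (H : AddSubgroup G) (s : G ⧸ H → G) (g : G) (y : G ⧸ H) : G :=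
  -s (QuotientAddGroup.mk g + y) + g + s y

/-- The `G`-action induced by an `H`-action `S`, relative to the cross-section `s`:
`T_g(y, x) = (π(g) + y, S_{h(g,y)} x)`. -/
def inducedAction (H : AddSubgroup G) (s : G ⧸ H → G) (S : G → X → X) :
    G → (G ⧸ H) × X → (G ⧸ H) × X :=
  fun g p => (QuotientAddGroup.mk g + p.1, S (secCocycle H s g p.1) p.2)

/-- Isomorphism of two measure-preserving `G`-actions: an invertible measure-preserving
map intertwining the two actions almost everywhere. -/
def IsoOfActions (μ : Measure X) (ν : Measure Y) (T : G → X → X) (T' : G → Y → Y) : Prop :=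
  ∃ Φ : X → Y, ∃ Ψ : Y → X,
    MeasurePreserving Φ μ ν ∧ MeasurePreserving Ψ ν μ ∧
    (∀ᵐ x ∂μ, Ψ (Φ x) = x) ∧ (∀ᵐ y ∂ν, Φ (Ψ y) = y) ∧
    ∀ g : G, ∀ᵐ x ∂μ, Φ (T g x) = T' g (Φ x)

/-- Isomorphism of two measure-preserving actions of a subgroup `H`. -/
def IsoOfActionsOn (H : AddSubgroup G) (μ : Measure X) (ν : Measure Y)
    (S : G → X → X) (S' : G → Y → Y) : Prop :=
  ∃ Φ : X → Y, ∃ Ψ : Y → X,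
    MeasurePreserving Φ μ ν ∧ MeasurePreserving Ψ ν μ ∧
    (∀ᵐ x ∂μ, Ψ (Φ x) = x) ∧ (∀ᵐ y ∂ν, Φ (Ψ y) = y) ∧
    ∀ h ∈ H, ∀ᵐ x ∂μ, Φ (S h x) = S' h (Φ x)

end ActionDefs

/-- If `S` is an ergodic measurable measure-preserving action of the
closed co-compact subgroup `H` of the locally compact second countable abelian group `G`
on a standard probability space `(X, μ)`, then the induced `G`-action on
`(G/H × X, λ × μ)` is ergodic. -/
theorem induced_action_ergodic
    {G : Type*} [AddCommGroup G] [TopologicalSpace G] [IsTopologicalAddGroup G]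
    [LocallyCompactSpace G] [SecondCountableTopology G] [MeasurableSpace G] [BorelSpace G]
    (H : AddSubgroup G) (hHclosed : IsClosed (H : Set G))
    [CompactSpace (G ⧸ H)] [MeasurableSpace (G ⧸ H)] [BorelSpace (G ⧸ H)]
    (lam : Measure (G ⧸ H)) [IsProbabilityMeasure lam] [lam.IsAddHaarMeasure]
    {X : Type*} [MeasurableSpace X] [StandardBorelSpace X]
    (μ : Measure X) [IsProbabilityMeasure μ]
    (s : G ⧸ H → G) (hs_meas : Measurable s)
    (hs_sec : ∀ y : G ⧸ H, QuotientAddGroup.mk (s y) = y) (hs_zero : s 0 = 0)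
    (S : G → X → X) (hS : IsMPActionOn H μ S)
    (hS_meas : Measurable fun p : G × X => S p.1 p.2)
    (hS_erg : IsErgodicActionOn H μ S) :
    IsErgodicAction (lam.prod μ) (inducedAction H s S) := by
  intro A hA hAinv
  classical
  set f : G ⧸ H → Set X := fun y => Prod.mk y ⁻¹' A with hf
  have hfmeas : ∀ y, MeasurableSet (f y) := fun y => hA.preimage measurable_prodMk_left
  -- the cocycle takes values in H
  have hcoc : ∀ (g : G) (y : G ⧸ H), secCocycle H s g y ∈ H := by
    intro g y
    rw [← QuotientAddGroup.eq_zero_iff]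
    show ((QuotientAddGroup.mk' H) (secCocycle H s g y)) = 0
    simp only [secCocycle, map_add, map_neg]
    have h1 : (QuotientAddGroup.mk' H) (s (QuotientAddGroup.mk g + y))
        = QuotientAddGroup.mk g + y := hs_sec _
    have h2 : (QuotientAddGroup.mk' H) (s y) = y := hs_sec _
    have h3 : (QuotientAddGroup.mk' H) g = QuotientAddGroup.mk g := rfl
    rw [h1, h2, h3]; abel
  -- slices are invariant under the H-action
  have hslice_inv : ∀ y, ∀ h ∈ H, S h ⁻¹' (f y) = f y := by
    intro y h hh
    have h0 : (QuotientAddGroup.mk h : G ⧸ H) = 0 := (QuotientAddGroup.eq_zero_iff h).2 hh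
    have hc : secCocycle H s h y = h := by
      simp only [secCocycle, h0, zero_add]; abel
    ext x
    have hinv := Set.ext_iff.1 (hAinv h) (y, x)
    simp only [inducedAction, Set.mem_preimage, h0, zero_add, hc] at hinv
    exact hinv
  -- translation invariance of y ↦ μ (f y)
  have htrans : ∀ (g : G) (y : G ⧸ H), μ (f y) = μ (f (QuotientAddGroup.mk g + y)) := by
    intro g y
    have hpre : f y = S (secCocycle H s g y) ⁻¹' f (QuotientAddGroup.mk g + y) := by
      ext x
      have hinv := Set.ext_iff.1 (hAinv g) (y, x)
      simp only [inducedAction, Set.mem_preimage] at hinv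
      exact hinv.symm
    rw [hpre]
    exact (hS.1 _ (hcoc g y)).measure_preimage (hfmeas _).nullMeasurableSet
  have hconst : ∀ y, μ (f y) = μ (f 0) := by
    intro y
    obtain ⟨g, rfl⟩ := QuotientAddGroup.mk_surjective y
    have := htrans g 0
    rw [add_zero] at this
    exact this.symm
  have hprod : (lam.prod μ) A = μ (f 0) := by
    rw [Measure.prod_apply hA]
    calc ∫⁻ y, μ (Prod.mk y ⁻¹' A) ∂lam = ∫⁻ _, μ (f 0) ∂lam := by
          refine lintegral_congr fun y => ?_
          exact hconst y
      _ = μ (f 0) := by simp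
  rcases hS_erg (f 0) (hfmeas 0) (hslice_inv 0) with h0 | h1
  · left; rw [hprod, h0]
  · right
    have : μ (f 0) = 1 := by
      have := prob_compl_eq_zero_iff (μ := μ) (hfmeas 0)
      exact this.1 h1
    rw [prob_compl_eq_zero_iff hA, hprod, this]
end

section
/- Let T = (T_g)_{g∈G} be a measurable measure-preserving action of G on a standard probability space (X,μ). Then the G-action T' induced by the restriction (T_h)_{h∈H} of T to H is isomorphic to the product action (V_g × T_g)_{g∈G} on (G/H × X, λ×μ): there is an invertible measure-preserving map Φ of (G/H × X, λ×μ) such that Φ ∘ T'_g = (V_g × T_g) ∘ Φ almost everywhere for every g ∈ G. -/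
open MeasureTheory

/-- For a measurable measure-preserving `G`-action `T` on a standard
probability space `(X, μ)`, the `G`-action induced by the restriction of `T` to the
closed co-compact subgroup `H` is isomorphic to the product action
`(V_g × T_g)` on `(G/H × X, λ × μ)`, where `V` is translation on `G/H`. -/
theorem induced_of_restriction_iso_product
    {G : Type*} [AddCommGroup G] [TopologicalSpace G] [IsTopologicalAddGroup G]
    [LocallyCompactSpace G] [SecondCountableTopology G] [MeasurableSpace G] [BorelSpace G]
    (H : AddSubgroup G) (hHclosed : IsClosed (H : Set G))
    [CompactSpace (G ⧸ H)] [MeasurableSpace (G ⧸ H)] [BorelSpace (G ⧸ H)]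
    (lam : Measure (G ⧸ H)) [IsProbabilityMeasure lam] [lam.IsAddHaarMeasure]
    {X : Type*} [MeasurableSpace X] [StandardBorelSpace X]
    (μ : Measure X) [IsProbabilityMeasure μ]
    (s : G ⧸ H → G) (hs_meas : Measurable s)
    (hs_sec : ∀ y : G ⧸ H, QuotientAddGroup.mk (s y) = y) (hs_zero : s 0 = 0)
    (T : G → X → X) (hT : IsMPAction μ T)
    (hT_meas : Measurable fun p : G × X => T p.1 p.2) :
    IsoOfActions (lam.prod μ) (lam.prod μ) (inducedAction H s T)
      (fun g p => (QuotientAddGroup.mk g + p.1, T g p.2)) := by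
  obtain ⟨hTmp, hT0, hTadd⟩ := hT
  have key : ∀ (a b : G) (x : X), T a (T b x) = T (a + b) x := by
    intro a b x
    rw [hTadd a b]; rfl
  have hmeas : ∀ c : G ⧸ H → G, Measurable c →
      Measurable (Function.uncurry fun y x => T (c y) x) := by
    intro c hc
    exact hT_meas.comp ((hc.comp measurable_fst).prodMk measurable_snd)
  refine ⟨fun p => (p.1, T (s p.1) p.2), fun p => (p.1, T (-s p.1) p.2), ?_, ?_, ?_, ?_, ?_⟩
  · exact (MeasurePreserving.id lam).skew_product (hmeas s hs_meas)
      (Filter.Eventually.of_forall fun y => (hTmp (s y)).map_eq)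
  · exact (MeasurePreserving.id lam).skew_product (hmeas (fun y => -s y) hs_meas.neg)
      (Filter.Eventually.of_forall fun y => (hTmp (-s y)).map_eq)
  · refine Filter.Eventually.of_forall fun p => ?_
    simp only [key, neg_add_cancel, hT0, id]
  · refine Filter.Eventually.of_forall fun p => ?_
    simp only [key, add_neg_cancel, hT0, id]
  · intro g
    refine Filter.Eventually.of_forall fun p => ?_
    simp only [inducedAction, secCocycle, key]
    congr 1
    abel_nf
end

section
/- Let σ be a finite Borel measure on ℝ such that for every real s ≠ 0 the translate σ * δ_s is mutually singular with σ. Then for every real t ≠ 0 there is a Borel set B ⊆ ℝ with σ(ℝ \ B) = 0 on which the natural projection ℝ → ℝ/tℤ is injective, i.e. whenever x, y ∈ B and x − y ∈ tℤ, then x = y. -/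
open MeasureTheory

theorem aux_key (σ : Measure ℝ)
    (hσ : ∀ s : ℝ, s ≠ 0 → (Measure.map (fun x : ℝ => x + s) σ).MutuallySingular σ)
    (t : ℝ) (ht : t ≠ 0) :
    ∀ k : ℤ, k ≠ 0 → ∃ A : Set ℝ, MeasurableSet A ∧ σ Aᶜ = 0 ∧
      ∀ x ∈ A, x + (k : ℝ) * t ∉ A := by
  intro k hk
  have hkt : (k : ℝ) * t ≠ 0 := mul_ne_zero (Int.cast_ne_zero.mpr hk) ht
  obtain ⟨S, hSm, hS1, hS2⟩ := hσ ((k : ℝ) * t) hkt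
  rw [Measure.map_apply (measurable_add_const _) hSm] at hS1
  refine ⟨S ∩ {x | x + (k : ℝ) * t ∈ Sᶜ},
    hSm.inter ((measurable_add_const ((k : ℝ) * t)) hSm.compl), ?_, ?_⟩
  · refine measure_mono_null (t := Sᶜ ∪ {x | x + (k : ℝ) * t ∈ S}) ?_ ?_
    · intro x hx
      simp only [Set.mem_compl_iff, Set.mem_inter_iff, Set.mem_setOf_eq, not_and, not_not] at hx ⊢
      by_cases h : x ∈ S
      · exact Or.inr (hx h)
      · exact Or.inl h
    · exact measure_union_null hS2 hS1
  · rintro x ⟨_, hx2⟩ ⟨hy1, _⟩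
    exact hx2 hy1

/-- If `σ` is a finite Borel measure on `ℝ` such that `σ * δ_s ⟂ σ` for
every `s ≠ 0`, then for every `t ≠ 0` the projection `ℝ → ℝ/tℤ` is injective on a Borel
set of full `σ`-measure. -/
theorem projection_injective_on_conull_set
    (σ : Measure ℝ) [IsFiniteMeasure σ]
    (hσ : ∀ s : ℝ, s ≠ 0 → (Measure.map (fun x : ℝ => x + s) σ).MutuallySingular σ)
    (t : ℝ) (ht : t ≠ 0) :
    ∃ B : Set ℝ, MeasurableSet B ∧ σ Bᶜ = 0 ∧
      ∀ x ∈ B, ∀ y ∈ B, (∃ k : ℤ, x - y = (k : ℝ) * t) → x = y := by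
  have key := aux_key σ hσ t ht
  set A : ℤ → Set ℝ := fun k => if hk : k = 0 then Set.univ else (key k hk).choose with hA
  refine ⟨⋂ k, A k, ?_, ?_, ?_⟩
  · refine MeasurableSet.iInter fun k => ?_
    by_cases hk : k = 0
    · simp [hA, hk]
    · simpa [hA, hk] using (key k hk).choose_spec.1
  · rw [Set.compl_iInter]
    refine measure_iUnion_null fun k => ?_
    by_cases hk : k = 0
    · simp [hA, hk]
    · simpa [hA, hk] using (key k hk).choose_spec.2.1
  · rintro x hx y hy ⟨k, hxy⟩
    by_cases hk : k = 0
    · have : x - y = 0 := by simp [hxy, hk]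
      linarith
    · exfalso
      have hx' : x ∈ A k := Set.mem_iInter.mp hx k
      have hy' : y ∈ A k := Set.mem_iInter.mp hy k
      have hAk : A k = (key k hk).choose := by simp [hA, hk]
      rw [hAk] at hx' hy'
      have := (key k hk).choose_spec.2.2 y hy'
      have hx'' : y + (k : ℝ) * t = x := by linarith
      rw [hx''] at this
      exact this hx'
end

section
/- Let (U(t))_{t∈ℝ} be a group homomorphism from (ℝ,+) into the group of unitary operators of a complex Hilbert space 𝓚, and let ξ₁, ξ₂ be rationally independent nonzero real numbers. Suppose that for j = 1, 2 there is a sequence (a⁽ʲ⁾_n) of real numbers such that U(a⁽ʲ⁾_n) converges in the weak operator topology to (1/2)(I + U(−ξ_j)). If f ∈ 𝓚, f ≠ 0, and λ ∈ ℝ satisfy U(t)f = exp(iλt)·f for every t ∈ ℝ, then λ = 0. -/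
open Filter Topology

lemma aux_cos_one (θ : ℝ) (h : ‖1 + Complex.exp (Complex.I * θ)‖ = 2) :
    ∃ k : ℤ, θ = k * (2 * Real.pi) := by
  have h2 : Complex.normSq (1 + Complex.exp (Complex.I * θ)) = 4 := by
    have h2 := congrArg (· ^ 2) h
    simp only [Complex.sq_norm] at h2
    norm_num at h2
    exact h2
  rw [mul_comm, Complex.exp_mul_I] at h2
  simp only [Complex.normSq_apply, Complex.add_re, Complex.add_im, Complex.one_re,
    Complex.one_im, Complex.cos_ofReal_re, Complex.sin_ofReal_re, Complex.mul_re,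
    Complex.mul_im, Complex.I_re, Complex.I_im, Complex.cos_ofReal_im,
    Complex.sin_ofReal_im, mul_zero, mul_one, zero_mul, sub_zero, zero_add,
    add_zero, zero_sub] at h2
  have hpy := Real.sin_sq_add_cos_sq θ
  have hcos : Real.cos θ = 1 := by nlinarith
  rw [Real.cos_eq_one_iff] at hcos
  obtain ⟨k, hk⟩ := hcos
  exact ⟨k, hk.symm⟩

/-- Let `(U(t))` be a one-parameter group of unitary operators on a complex
Hilbert space `𝓚` and `ξ₁, ξ₂` rationally independent nonzero reals. If for `j = 1, 2`
there are sequences `(aʲₙ)` of reals with `U(aʲₙ) → (1/2)(I + U(-ξⱼ))` in the weak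
operator topology, then the only eigenvalue `exp(iλ·)` of `U` with a nonzero eigenvector
is the one with `λ = 0`. -/
theorem weak_mixing_of_weak_limits
    {𝓚 : Type*} [NormedAddCommGroup 𝓚] [InnerProductSpace ℂ 𝓚] [CompleteSpace 𝓚]
    (U : ℝ → 𝓚 →L[ℂ] 𝓚)
    (hU_zero : U 0 = ContinuousLinearMap.id ℂ 𝓚)
    (hU_add : ∀ s t : ℝ, U (s + t) = (U s).comp (U t))
    (hU_iso : ∀ t : ℝ, ∀ x : 𝓚, ‖U t x‖ = ‖x‖)
    (hU_surj : ∀ t : ℝ, Function.Surjective (U t))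
    (ξ₁ ξ₂ : ℝ) (hξ₁ : ξ₁ ≠ 0) (hξ₂ : ξ₂ ≠ 0)
    (hind : ∀ q₁ q₂ : ℚ, (q₁ : ℝ) * ξ₁ + (q₂ : ℝ) * ξ₂ = 0 → q₁ = 0 ∧ q₂ = 0)
    (a₁ a₂ : ℕ → ℝ)
    (h₁ : ∀ x y : 𝓚, Tendsto (fun n => (inner ℂ (U (a₁ n) x) y : ℂ)) atTop
      (𝓝 (inner ℂ (((1 : ℂ) / 2) • (x + U (-ξ₁) x)) y)))
    (h₂ : ∀ x y : 𝓚, Tendsto (fun n => (inner ℂ (U (a₂ n) x) y : ℂ)) atTop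
      (𝓝 (inner ℂ (((1 : ℂ) / 2) • (x + U (-ξ₂) x)) y)))
    (f : 𝓚) (hf : f ≠ 0) (lam : ℝ)
    (heig : ∀ t : ℝ, U t f = Complex.exp (Complex.I * (lam : ℂ) * (t : ℂ)) • f) :
    lam = 0 := by
  by_contra hlam
  have hnf : (0 : ℝ) < ‖f‖ ^ 2 := by
    have := norm_pos_iff.mpr hf
    positivity
  have main : ∀ (ξ : ℝ) (a : ℕ → ℝ),
      (∀ x y : 𝓚, Tendsto (fun n => (inner ℂ (U (a n) x) y : ℂ)) atTop
        (𝓝 (inner ℂ (((1 : ℂ) / 2) • (x + U (-ξ) x)) y))) →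
      ∃ k : ℤ, lam * ξ = k * (2 * Real.pi) := by
    intro ξ a ha
    have key := ha f f
    -- norms of the sequence are constant ‖f‖²
    have habs : ∀ n : ℕ, ‖(inner ℂ (U (a n) f) f : ℂ)‖ = ‖f‖ ^ 2 := by
      intro n
      rw [heig (a n), inner_smul_left, norm_mul, Complex.norm_conj,
        inner_self_eq_norm_sq_to_K, Complex.norm_exp]
      have : (Complex.I * (lam : ℂ) * ((a n : ℝ) : ℂ)).re = 0 := by
        simp [Complex.mul_re, Complex.mul_im]
      rw [this]
      simp [norm_pow]
    -- identify the limit value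
    have hlim : (inner ℂ (((1 : ℂ) / 2) • (f + U (-ξ) f)) f : ℂ)
        = (1 / 2 : ℂ) * (1 + Complex.exp (Complex.I * (lam : ℂ) * (ξ : ℂ))) * (‖f‖ : ℂ) ^ 2 := by
      rw [heig (-ξ), inner_smul_left, inner_add_left, inner_smul_left,
        inner_self_eq_norm_sq_to_K, ← Complex.exp_conj]
      have hconj : (starRingEnd ℂ) (Complex.I * (lam : ℂ) * ((-ξ : ℝ) : ℂ))
          = Complex.I * (lam : ℂ) * (ξ : ℂ) := by
        simp [map_mul, Complex.conj_ofReal, Complex.conj_I]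
      have h12 : (starRingEnd ℂ) ((1 : ℂ) / 2) = 1 / 2 := by
        rw [map_div₀, map_one, map_ofNat]
      rw [hconj, h12]
      ring!
    have htend : Tendsto (fun n => ‖(inner ℂ (U (a n) f) f : ℂ)‖) atTop
        (𝓝 ‖(inner ℂ (((1 : ℂ) / 2) • (f + U (-ξ) f)) f : ℂ)‖) :=
      (continuous_norm.tendsto _).comp key
    have habs' : (fun n => ‖(inner ℂ (U (a n) f) f : ℂ)‖)
        = fun _ : ℕ => ‖f‖ ^ 2 := funext habs
    rw [habs'] at htend
    have heq : ‖(inner ℂ (((1 : ℂ) / 2) • (f + U (-ξ) f)) f : ℂ)‖ = ‖f‖ ^ 2 :=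
      tendsto_nhds_unique htend tendsto_const_nhds
    rw [hlim, norm_mul, norm_mul] at heq
    have hE : ‖1 + Complex.exp (Complex.I * (lam : ℂ) * (ξ : ℂ))‖ = 2 := by
      have h12 : ‖(1 : ℂ) / 2‖ = 1 / 2 := by norm_num [norm_div]
      have hF : ‖(‖f‖ : ℂ) ^ 2‖ = ‖f‖ ^ 2 := by
        rw [norm_pow, Complex.norm_real, Real.norm_eq_abs, abs_of_nonneg (norm_nonneg f)]
      rw [h12, hF] at heq
      nlinarith
    have hE' : ‖1 + Complex.exp (Complex.I * ((lam * ξ : ℝ) : ℂ))‖ = 2 := by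
      rw [show (Complex.I * ((lam * ξ : ℝ) : ℂ)) = Complex.I * (lam : ℂ) * (ξ : ℂ) by
        push_cast; ring]
      exact hE
    exact aux_cos_one (lam * ξ) hE'
  obtain ⟨k₁, hk₁⟩ := main ξ₁ a₁ h₁
  obtain ⟨k₂, hk₂⟩ := main ξ₂ a₂ h₂
  have hk₁0 : k₁ ≠ 0 := by
    intro h0
    rw [h0] at hk₁
    simp at hk₁
    rcases hk₁ with h | h
    · exact hlam h
    · exact hξ₁ h
  have e : lam * ((k₂ : ℝ) * ξ₁ + (-(k₁ : ℝ)) * ξ₂)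
      = (k₂ : ℝ) * (lam * ξ₁) - (k₁ : ℝ) * (lam * ξ₂) := by ring
  rw [hk₁, hk₂] at e
  have e2 : lam * ((k₂ : ℝ) * ξ₁ + (-(k₁ : ℝ)) * ξ₂) = 0 := by rw [e]; ring
  have hrel : ((k₂ : ℚ) : ℝ) * ξ₁ + (((-(k₁ : ℚ)) : ℚ) : ℝ) * ξ₂ = 0 := by
    rcases mul_eq_zero.1 e2 with h | h
    · exact absurd h hlam
    · push_cast
      push_cast at h
      linarith
  have hzero := hind (k₂ : ℚ) (-(k₁ : ℚ)) hrel
  exact hk₁0 (by exact_mod_cast neg_eq_zero.mp hzero.2)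
end

section
/- Let G be a nontrivial countable torsion-free abelian group that is not isomorphic to ℤ. Then there exists an injective group homomorphism φ : G → (ℝ,+) whose image φ(G) is dense in ℝ. -/
theorem exists_injective_linearMap_real (V : Type*) [AddCommGroup V] [Module ℚ V] [Countable V] :
    ∃ f : V →ₗ[ℚ] ℝ, Function.Injective f := by
  classical
  let b := Module.Basis.ofVectorSpace ℚ V
  let B := Module.Basis.ofVectorSpace ℚ ℝ
  have hinf : Infinite (Module.Basis.ofVectorSpaceIndex ℚ ℝ) := by
    rw [Cardinal.infinite_iff, B.mk_eq_rank'', Real.rank_rat_real]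
    exact Cardinal.aleph0_le_continuum
  obtain ⟨f1, hf1⟩ := exists_injective_nat (Module.Basis.ofVectorSpaceIndex ℚ V)
  let e : Module.Basis.ofVectorSpaceIndex ℚ V ↪ Module.Basis.ofVectorSpaceIndex ℚ ℝ :=
    (⟨f1, hf1⟩ : _ ↪ ℕ).trans (Infinite.natEmbedding _)
  have hli : LinearIndependent ℚ (fun i => B (e i)) :=
    B.linearIndependent.comp e e.injective
  refine ⟨b.constr ℚ (fun i => B (e i)), ?_⟩
  rw [← LinearMap.ker_eq_bot, LinearMap.ker_eq_bot']
  intro v hv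
  rw [Module.Basis.constr_apply] at hv
  have h1 : Finsupp.linearCombination ℚ (fun i => B (e i)) (b.repr v) = 0 := by
    rwa [Finsupp.linearCombination_apply]
  have h0 : b.repr v = 0 := hli (by rw [h1, map_zero])
  simpa using congrArg b.repr.symm h0

theorem exists_injective_addHom_real (G : Type*) [AddCommGroup G] [Countable G]
    (htf : ∀ g : G, g ≠ 0 → ¬IsOfFinAddOrder g) : ∃ φ : G →+ ℝ, Function.Injective φ := by
  classical
  have hns : NoZeroSMulDivisors ℤ G := @IsAddTorsionFree.to_noZeroSMulDivisors_int G _ (isAddTorsionFree_iff_not_isOfFinAddOrder.mpr fun a ha => htf a ha)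
  set S := nonZeroDivisors ℤ with hS
  let V := LocalizedModule S G
  have hVc : Countable V := by
    have hsurj : Function.Surjective (fun p : G × S => (LocalizedModule.mk p.1 p.2 : V)) := by
      intro v
      induction v using LocalizedModule.induction_on with
      | h m s => exact ⟨(m, s), rfl⟩
    exact hsurj.countable
  let g : G →+ V :=
    AddMonoidHom.mk' (fun m => LocalizedModule.mk m 1) (by
      intro m m'
      rw [LocalizedModule.mk_add_mk]
      simp)
  have hg : Function.Injective g := by
    intro m m' hmm
    obtain ⟨u, hu⟩ := LocalizedModule.mk_eq.mp hmm
    simp only [one_smul] at hu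
    have hu0 : (u : ℤ) ≠ 0 := nonZeroDivisors.ne_zero u.2
    have : (u : ℤ) • m = (u : ℤ) • m' := hu
    rcases smul_right_injective G hu0 this with h
    exact h
  letI : Module ℚ V := Module.compHom V (Rat.castHom (FractionRing ℤ))
  obtain ⟨f, hf⟩ := exists_injective_linearMap_real V
  exact ⟨f.toAddMonoidHom.comp g, hf.comp hg⟩

/-- Every nontrivial countable torsion-free abelian group that is not
isomorphic to `ℤ` admits an injective group homomorphism into `(ℝ, +)` with dense
image. -/
theorem embeds_densely_in_real
    (G : Type*) [AddCommGroup G] [Countable G] [Nontrivial G]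
    (htf : ∀ g : G, g ≠ 0 → ¬IsOfFinAddOrder g)
    (hnZ : IsEmpty (G ≃+ ℤ)) :
    ∃ φ : G →+ ℝ, Function.Injective φ ∧ Dense (Set.range φ) := by
  obtain ⟨φ, hφ⟩ := exists_injective_addHom_real G htf
  refine ⟨φ, hφ, ?_⟩
  rcases AddSubgroup.dense_or_cyclic φ.range with h | ⟨a, ha⟩
  · simpa [AddMonoidHom.coe_range] using h
  · exfalso
    rcases eq_or_ne a 0 with rfl | ha0
    · obtain ⟨x, hx⟩ := exists_ne (0 : G)
      have hmem : φ x ∈ φ.range := ⟨x, rfl⟩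
      rw [ha] at hmem
      simp only [AddSubgroup.closure_singleton_zero, AddSubgroup.mem_bot] at hmem
      exact hx (hφ (by simpa using hmem))
    · have e1 : G ≃+ φ.range := AddMonoidHom.ofInjective hφ
      have hz : Function.Injective (zmultiplesHom ℝ a) := by
        intro m n hmn
        have h2 : (m - n) • a = 0 := by
          simp only [zmultiplesHom_apply] at hmn
          rw [sub_smul, hmn, sub_self]
        rcases smul_eq_zero.mp h2 with h | h
        · omega
        · exact absurd h ha0
      have hrange : (zmultiplesHom ℝ a).range = φ.range := by
        rw [ha, ← AddSubgroup.zmultiples_eq_closure]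
        ext x
        simp [AddMonoidHom.mem_range, AddSubgroup.mem_zmultiples_iff, zmultiplesHom_apply]
      have e2 : ℤ ≃+ φ.range :=
        (AddMonoidHom.ofInjective hz).trans (AddEquiv.addSubgroupCongr hrange)
      exact hnZ.elim (e1.trans e2.symm)
end
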